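/- arXiv:2104.14950 — 2 statements merged into one kernel-verified Lean document; each statement's English description precedes it below -/
import Mathlib

section
/- Suppose P satisfies (C1), (C2), (C3), and (C4). Then for any integers a and c, ℙ^a-almost surely, lim_{x→∞} (1/x) Σ_{k=c}^{x} N_k = 1/v, where the limit is +∞ if v = 0. -/
open MeasureTheory ProbabilityTheory Filter
open scoped ENNReal NNReal Classical

noncomputable section

/-- An environment on `ℤ`: a candidate family of transition probabilities. -/
abbrev Env : Type := ℤ → ℤ → ℝ

/-- `ω` is a proper environment: each row is a probability vector on `ℤ`. -/
def IsEnv (ω : Env) : Prop :=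
  (∀ x y, 0 ≤ ω x y) ∧ ∀ x, HasSum (ω x) 1

/-- `μ` is the quenched law `P_ω^x` of the Markov chain in environment `ω` started at `x`:
it is the probability measure on paths whose cylinder probabilities are the products of the
transition probabilities `ω`. -/
def IsQuenched (ω : Env) (x : ℤ) (μ : Measure (ℕ → ℤ)) : Prop :=
  IsProbabilityMeasure μ ∧
    ∀ (n : ℕ) (f : ℕ → ℤ),
      μ {X | ∀ i ≤ n, X i = f i} =
        ENNReal.ofReal ((if f 0 = x then 1 else 0) *
          ∏ i ∈ Finset.range n, ω (f i) (f (i + 1)))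

/-- `Pq` assigns to every proper environment `ω` and starting point `x` the quenched law
`P_ω^x`. -/
def IsQuenchedFamily (Pq : Env → ℤ → Measure (ℕ → ℤ)) : Prop :=
  ∀ ω, IsEnv ω → ∀ x, IsQuenched ω x (Pq ω x)

/-- The row of the environment at site `x`, as a function of the increment. -/
def rowOf (x : ℤ) (ω : Env) : ℤ → ℝ := fun i => ω x (x + i)

/-- Condition (C1): the rows `(ω(x, x+·))_{x ∈ ℤ}` are i.i.d. under `P`
(and `P` is a probability measure on proper environments). -/
def CondIID (P : Measure Env) : Prop :=
  IsProbabilityMeasure P ∧ (∀ᵐ ω ∂P, IsEnv ω) ∧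
    iIndepFun rowOf P ∧
    ∀ x : ℤ, P.map (rowOf x) = P.map (rowOf 0)

/-- The Markov chain given by `ω` is irreducible. -/
def IrreducibleEnv (ω : Env) : Prop :=
  ∀ x y : ℤ, ∃ (n : ℕ) (f : ℕ → ℤ), f 0 = x ∧ f n = y ∧ ∀ i < n, 0 < ω (f i) (f (i + 1))

/-- Condition (C2). -/
def CondIrred (P : Measure Env) : Prop := ∀ᵐ ω ∂P, IrreducibleEnv ω

/-- Condition (C3): jumps lie in `[-L, R]`. -/
def CondBdd (L R : ℕ) (P : Measure Env) : Prop :=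
  ∀ᵐ ω ∂P, ∀ a b : ℤ, (b - a < -(L : ℤ) ∨ (R : ℤ) < b - a) → ω a b = 0

/-- Condition (C4): for `P`-a.e. `ω`, the walk started at `0` tends to `+∞`, `P_ω^0`-a.s. -/
def CondTrans (P : Measure Env) (Pq : Env → ℤ → Measure (ℕ → ℤ)) : Prop :=
  ∀ᵐ ω ∂P, (Pq ω 0) {X | Tendsto X atTop atTop} = 1

/-- `v` is the annealed a.s. limiting velocity of the walk started at `0`. -/
def ASLimVelocity (P : Measure Env) (Pq : Env → ℤ → Measure (ℕ → ℤ)) (v : ℝ) : Prop :=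
  ∫⁻ ω, (Pq ω 0) {X | ¬ Tendsto (fun n : ℕ => (X n : ℝ) / (n : ℝ)) atTop (nhds v)} ∂P = 0

/-- `N_x`: number of visits of the path `X` to the site `x`. -/
def Ncount (x : ℤ) (X : ℕ → ℤ) : ℝ≥0∞ := ∑' n : ℕ, if X n = x then 1 else 0

/-- `N_x^S`: number of visits to `x` strictly before the first exit from `S`. -/
def NcountIn (S : Set ℤ) (x : ℤ) (X : ℕ → ℤ) : ℝ≥0∞ :=
  ∑' n : ℕ, if X n = x ∧ ∀ m ≤ n, X m ∈ S then 1 else 0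

/-- `N_{x,y}`: number of visits to `x` whose most recent preceding visit to `{x,y}` pattern
has the last visit to `y` after the last visit to `x` (number of trips from `y` to `x`). -/
def Ntrip (x y : ℤ) (X : ℕ → ℤ) : ℝ≥0∞ :=
  ∑' n : ℕ, if X n = x ∧ ∃ j < n, X j = y ∧ ∀ k < n, X k = x → k < j then 1 else 0

/-- `N'_{x,y}`: number of leftward crossings of `[x,y]`. -/
def NtripCross (x y : ℤ) (X : ℕ → ℤ) : ℝ≥0∞ :=
  ∑' n : ℕ, if X n ≤ x ∧ ∃ j < n, y ≤ X j ∧ ∀ k < n, X k ≤ x → k < j then 1 else 0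

/-- `H_{≥ z}`: hitting time of `[z, ∞)`, as an extended nonnegative real. -/
def Hge (z : ℤ) (X : ℕ → ℤ) : ℝ≥0∞ := sInf ((fun n : ℕ => (n : ℝ≥0∞)) '' {n | z ≤ X n})

/-- `H̃_x`: first positive hitting time of `x`, as an extended nonnegative real. -/
def Hret (x : ℤ) (X : ℕ → ℤ) : ℝ≥0∞ :=
  sInf ((fun n : ℕ => (n : ℝ≥0∞)) '' {n | 0 < n ∧ X n = x})

/-- The Dirichlet distribution with parameters `(a j)_{j ∈ J}`, realized as the law of a
normalized vector of independent Gamma random variables, viewed as a measure on `ℤ → ℝ`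
(coordinates outside `J` are `0`). -/
def dirichletRow (J : Finset ℤ) (a : ℤ → ℝ) : Measure (ℤ → ℝ) :=
  Measure.map (fun g : J → ℝ => fun i : ℤ =>
      if h : i ∈ J then g ⟨i, h⟩ / (∑ j : J, g j) else 0)
    (Measure.pi fun j : J => gammaMeasure (a (j : ℤ)) 1)

/-- The support of the weights. -/
def suppSet (L R : ℕ) (α : ℤ → ℝ) : Finset ℤ :=
  (Finset.Icc (-(L : ℤ)) (R : ℤ)).filter fun i => 0 < α i

/-- `P = P_𝒢`: the rows are i.i.d. Dirichlet with parameters `(α_i)_{i : α_i > 0}`. -/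
def IsDirichletLaw (L R : ℕ) (α : ℤ → ℝ) (P : Measure Env) : Prop :=
  IsProbabilityMeasure P ∧ (∀ᵐ ω ∂P, IsEnv ω) ∧
    iIndepFun rowOf P ∧
    ∀ x : ℤ, P.map (rowOf x) = dirichletRow (suppSet L R α) α

/-- `d⁺ = Σ_{i=1}^R i α_i`. -/
def dplus (R : ℕ) (α : ℤ → ℝ) : ℝ := ∑ i ∈ Finset.Icc (1 : ℤ) (R : ℤ), (i : ℝ) * α i

/-- `d⁻ = Σ_{i=-L}^{-1} |i| α_i`. -/
def dminus (L : ℕ) (α : ℤ → ℝ) : ℝ :=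
  ∑ i ∈ Finset.Icc (-(L : ℤ)) (-1 : ℤ), |(i : ℝ)| * α i

/-- `κ₁ = d⁺ - d⁻`. -/
def kappa1 (L R : ℕ) (α : ℤ → ℝ) : ℝ := dplus R α - dminus L α

/-- `S` is finite, nonempty and strongly connected in the graph `𝒢`. -/
def IsSC (α : ℤ → ℝ) (S : Finset ℤ) : Prop :=
  S.Nonempty ∧ ∀ x ∈ S, ∀ y ∈ S, ∃ (n : ℕ) (f : ℕ → ℤ),
    f 0 = x ∧ f n = y ∧ (∀ i ≤ n, f i ∈ S) ∧ ∀ i < n, 0 < α (f (i + 1) - f i)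

/-- `β_S`: total weight of edges of `𝒢` exiting `S`. -/
def betaExit (L R : ℕ) (α : ℤ → ℝ) (S : Finset ℤ) : ℝ :=
  ∑ x ∈ S, ∑ i ∈ Finset.Icc (-(L : ℤ)) (R : ℤ), if x + i ∉ S then α i else 0

/-- `κ₀`: infimum of `β_S` over finite nonempty strongly connected `S`. -/
def kappa0 (L R : ℕ) (α : ℤ → ℝ) : ℝ :=
  sInf {b : ℝ | ∃ S : Finset ℤ, IsSC α S ∧ betaExit L R α S = b}

/-- Regeneration times `τ_k`. -/
def regenTime (X : ℕ → ℤ) : ℕ → ℕ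
  | 0 => 0
  | k + 1 => sInf {n : ℕ | regenTime X k < n ∧ (∀ j < n, X j < X n) ∧ ∀ j, n < j → X n ≤ X j}

/-- Cascades: one (stopped) walk attached to each site of `ℤ`. -/
abbrev Casc : Type := ℤ → ℕ → ℤ

/-- The index `k` of the level `((k-1)R, kR]` containing `x`, i.e. `⌈x/R⌉`. -/
def levelIdx (R : ℕ) (x : ℤ) : ℤ := -(Int.ediv (-x) (R : ℤ))

/-- First hitting time of the level of `a + R` by the path `Y`. -/
def levelHit (R : ℕ) (a : ℤ) (Y : ℕ → ℤ) : ℕ :=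
  sInf {n : ℕ | levelIdx R (Y n) = levelIdx R (a + (R : ℤ))}

/-- The path `Y` stopped upon first reaching the level of `a + R`. -/
def stopWalk (R : ℕ) (a : ℤ) (Y : ℕ → ℤ) : ℕ → ℤ := fun n => Y (min n (levelHit R a Y))

/-- `μ` is the law of the cascade in the environment `ω`: independent coordinates, the
coordinate at `a` being a walk of law `P_ω^a` stopped upon first reaching the level of `a+R`. -/
def IsCascadeLaw (R : ℕ) (Pq : Env → ℤ → Measure (ℕ → ℤ)) (ω : Env) (μ : Measure Casc) :
    Prop :=
  IsProbabilityMeasure μ ∧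
    iIndepFun (fun a (c : Casc) => c a) μ ∧
    ∀ a : ℤ, μ.map (fun c => c a) = (Pq ω a).map (stopWalk R a)

/-- Bookkeeping for concatenation of the cascade walks: starting site and starting time of the
`k`-th stopped walk entering the concatenated walk from `a`. -/
def concatData (R : ℕ) (c : Casc) (a : ℤ) : ℕ → ℤ × ℕ
  | 0 => (a, 0)
  | k + 1 =>
      let p := concatData R c a k
      (c p.1 (levelHit R p.1 (c p.1)), p.2 + levelHit R p.1 (c p.1))

/-- The concatenated walk `X^a` of the cascade `c`. -/
def Xconcat (R : ℕ) (c : Casc) (a : ℤ) (n : ℕ) : ℤ :=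
  c (concatData R c a (sInf {k : ℕ | n < (concatData R c a (k + 1)).2})).1
    (n - (concatData R c a (sInf {k : ℕ | n < (concatData R c a (k + 1)).2})).2)

/-- The coalescence event `C_x`: every walk of the cascade started in the level of `x - R`
first hits the level of `x` at `x`. -/
def Coal (R : ℕ) (c : Casc) (x : ℤ) : Prop :=
  ∀ a : ℤ, levelIdx R a = levelIdx R (x - (R : ℤ)) → c a (levelHit R a (c a)) = x

/-- The event `ℰ₁`: all concatenated walks tend to `+∞`, all jumps lie in `[-L, R]`, and
coalescence events occur at infinitely many sites to the left and to the right of `0`. -/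
def CascEvent (L R : ℕ) (c : Casc) : Prop :=
  (∀ a : ℤ, Tendsto (Xconcat R c a) atTop atTop) ∧
    (∀ (a : ℤ) (n : ℕ), -(L : ℤ) ≤ c a (n + 1) - c a n ∧ c a (n + 1) - c a n ≤ (R : ℤ)) ∧
    (∀ M : ℤ, ∃ x : ℤ, x < M ∧ Coal R c x) ∧
    (∀ M : ℤ, ∃ x : ℤ, M < x ∧ Coal R c x)

/-- `N̄_0`: the time spent at `0` by the bi-infinite walk `X̄`, realized as the limit (here:
`limsup`) as `a → -∞` of the time spent at `0` by the concatenated walk `X^a`. -/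
def NbarZero (R : ℕ) (c : Casc) : ℝ≥0∞ :=
  Filter.limsup (fun a : ℤ => Ncount 0 (Xconcat R c a)) Filter.atBot

end

/-!
Along a single path with `X_n → ∞`, every level is visited finitely often, so the number of
visits to `[c, x]` is at least the first passage time above `x` minus the (finitely many) visits
below `c`, and at most one plus the last exit time from `(-∞, x]`. Both times `τ` tend to `∞` with
`x < X_τ` respectively `X_τ ≤ x`, and `τ / X_τ → 1/v`; hence `(1/x) Σ_{k=c}^x N_k → 1/v`. Working
in `ℝ≥0∞`, where `n / X_n = (X_n / n)⁻¹ → (ENNReal.ofReal v)⁻¹`, treats `v ≤ 0` (limit `∞`) and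
`v > 0` at once.

To pass from the walk started at `0` to the walk started at `a`: under (C1) the law of the
environment is invariant under shifts, since the rows form an i.i.d. product, and the quenched law
from `a`, translated by `-a`, is the quenched law from `0` in the environment shifted by `a`.
-/

open Topology

section Pathwise

variable {X : ℕ → ℤ}

lemma sum_Ncount_Icc_eq_encard (c x : ℤ) :
    ∑ k ∈ Finset.Icc c x, Ncount k X = (X ⁻¹' Set.Icc c x).encard := by
  rw [← ENNReal.tsum_set_one, tsum_subtype _ fun _ => (1 : ℝ≥0∞)]
  simp only [Ncount]
  rw [← Summable.tsum_finsetSum fun _ _ => ENNReal.summable]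
  congr 1 with n
  simp [Set.indicator, Finset.sum_ite_eq]

lemma encard_preimage_Icc_le_succ {N : ℕ} {c x : ℤ} (h : ∀ n, N < n → x < X n) :
    (X ⁻¹' Set.Icc c x).encard ≤ N + 1 := by
  calc (X ⁻¹' Set.Icc c x).encard ≤ {n | n < N + 1}.encard :=
        Set.encard_le_encard fun n hn => by
          by_contra hlt
          exact (h n (by simp only [Set.mem_ofPred_eq, not_lt] at hlt; omega)).not_ge hn.2
    _ = N + 1 := by rw [Set.Nat.encard_range]; norm_cast

lemma le_encard_preimage_Icc_add_Iio {N : ℕ} {c x : ℤ} (h : ∀ n < N, X n ≤ x) :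
    (N : ℕ∞) ≤ (X ⁻¹' Set.Icc c x).encard + (X ⁻¹' Set.Iio c).encard := by
  calc (N : ℕ∞) = {n | n < N}.encard := (Set.Nat.encard_range N).symm
    _ ≤ (X ⁻¹' Set.Icc c x ∪ X ⁻¹' Set.Iio c).encard :=
        Set.encard_le_encard fun n hn => by
          by_cases hc : c ≤ X n
          · exact Or.inl ⟨hc, h n hn⟩
          · exact Or.inr (not_le.1 hc)
    _ ≤ _ := Set.encard_union_le _ _

lemma encard_preimage_Iio_ne_top (hX : Tendsto X atTop atTop) (c : ℤ) :
    ((X ⁻¹' Set.Iio c).encard : ℝ≥0∞) ≠ ∞ := by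
  have : ∀ᶠ n in cofinite, c ≤ X n := Nat.cofinite_eq_atTop ▸ hX.eventually_ge_atTop c
  exact ENat.toENNReal_ne_top.2
    (Set.Finite.encard_lt_top (s := {n | X n < c}) (by simpa using this)).ne

lemma exists_first_passage_gt (hX : Tendsto X atTop atTop) (y : ℤ) :
    ∃ N, y < X N ∧ ∀ n < N, X n ≤ y := by
  have h : ∃ N, y < X N := (hX.eventually_gt_atTop y).exists
  exact ⟨Nat.find h, Nat.find_spec h, fun n hn => not_lt.1 (Nat.find_min h hn)⟩

lemma exists_last_exit_le (hX : Tendsto X atTop atTop) (y : ℤ) :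
    ∃ M, (M = 0 ∨ X M ≤ y) ∧ ∀ n, M < n → y < X n := by
  have h : ∃ M, ∀ n, M < n → y < X n := by
    obtain ⟨M, hM⟩ := eventually_atTop.1 (hX.eventually_gt_atTop y)
    exact ⟨M, fun n hn => hM n hn.le⟩
  refine ⟨Nat.find h, ?_, Nat.find_spec h⟩
  rcases Nat.eq_zero_or_pos (Nat.find h) with h0 | hpos
  · exact Or.inl h0
  · have := Nat.find_min h (Nat.sub_one_lt hpos.ne')
    push Not at this
    obtain ⟨n, hn, hXn⟩ := this
    obtain rfl : n = Nat.find h := by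
      by_contra hne
      exact (Nat.find_spec h n (by omega)).not_ge hXn
    exact Or.inr hXn

lemma tendsto_atTop_of_natCast_lt_apply {τ : ℕ → ℕ} (h : ∀ x : ℕ, (x : ℤ) < X (τ x)) :
    Tendsto τ atTop atTop := by
  refine tendsto_atTop.2 fun N => ?_
  have hbound : ∀ᶠ x : ℕ in atTop, ∀ n ∈ Finset.range N, X n ≤ x :=
    (Finset.range N).eventually_all.2 fun n _ =>
      tendsto_natCast_atTop_atTop.eventually_ge_atTop (X n)
  filter_upwards [hbound] with x hx
  by_contra hlt
  exact (h x).not_ge (hx _ (Finset.mem_range.2 (not_le.1 hlt)))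

lemma tendsto_atTop_of_natCast_lt_of_lt {τ : ℕ → ℕ} (h : ∀ (x : ℕ) n, τ x < n → (x : ℤ) < X n) :
    Tendsto τ atTop atTop :=
  tendsto_atTop.2 fun N => (tendsto_natCast_atTop_atTop.eventually_ge_atTop (X N)).mono
    fun x hx => not_lt.1 fun hlt => (h x N hlt).not_ge hx

lemma tendsto_div_ofReal_of_tendsto_div {v : ℝ}
    (hvel : Tendsto (fun n : ℕ => (X n : ℝ) / n) atTop (𝓝 v)) :
    Tendsto (fun n : ℕ => (n : ℝ≥0∞) / ENNReal.ofReal (X n)) atTop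
      (𝓝 (ENNReal.ofReal v)⁻¹) := by
  refine ((ENNReal.continuous_ofReal.tendsto v).comp hvel).inv.congr' ?_
  filter_upwards [eventually_gt_atTop 0] with n hn
  have hn' : (0 : ℝ) < n := by exact_mod_cast hn
  simp only [Function.comp_apply]
  rw [ENNReal.ofReal_div_of_pos hn', ENNReal.ofReal_natCast,
    ENNReal.inv_div (by simp) (by simp [hn.ne'])]

lemma div_ofReal_sub_le_encard_div {N x : ℕ} {c : ℤ} (hx : x ≠ 0)
    (hd : ((X ⁻¹' Set.Iio c).encard : ℝ≥0∞) ≠ ∞) (hgt : (x : ℤ) < X N) (hmin : ∀ n < N, X n ≤ x) :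
    (N : ℝ≥0∞) / ENNReal.ofReal (X N) - ((X ⁻¹' Set.Iio c).encard : ℝ≥0∞) / x ≤
      ((X ⁻¹' Set.Icc c x).encard : ℝ≥0∞) / x := by
  set m : ℝ≥0∞ := ((X ⁻¹' Set.Icc c x).encard : ℝ≥0∞)
  set d : ℝ≥0∞ := ((X ⁻¹' Set.Iio c).encard : ℝ≥0∞)
  have hxN : (x : ℝ≥0∞) ≤ ENNReal.ofReal (X N) := by
    rw [← ENNReal.ofReal_natCast]
    exact ENNReal.ofReal_le_ofReal (by exact_mod_cast hgt.le)
  have hNmd : (N : ℝ≥0∞) ≤ m + d := by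
    simpa [m, d] using ENat.toENNReal_le.2 (le_encard_preimage_Icc_add_Iio (c := c) hmin)
  calc (N : ℝ≥0∞) / ENNReal.ofReal (X N) - d / x ≤ N / x - d / x :=
        tsub_le_tsub_right (ENNReal.div_le_div_left hxN _) _
    _ ≤ (m + d) / x - d / x := tsub_le_tsub_right (ENNReal.div_le_div_right hNmd _) _
    _ = m / x := by
        rw [ENNReal.add_div, ENNReal.add_sub_cancel_right
          (ENNReal.div_ne_top hd (by simpa using hx))]

lemma encard_div_le_div_ofReal_add {M x : ℕ} {c : ℤ} (hM : M = 0 ∨ X M ≤ x)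
    (hmax : ∀ n, M < n → (x : ℤ) < X n) :
    ((X ⁻¹' Set.Icc c x).encard : ℝ≥0∞) / x ≤ (M : ℝ≥0∞) / ENNReal.ofReal (X M) + (x : ℝ≥0∞)⁻¹ := by
  have hm : ((X ⁻¹' Set.Icc c x).encard : ℝ≥0∞) ≤ M + 1 := by
    simpa using ENat.toENNReal_le.2 (encard_preimage_Icc_le_succ (c := c) hmax)
  have hMx : (M : ℝ≥0∞) / x ≤ M / ENNReal.ofReal (X M) := by
    rcases hM with rfl | hM
    · simp
    · refine ENNReal.div_le_div_left ?_ _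
      rw [← ENNReal.ofReal_natCast]
      exact ENNReal.ofReal_le_ofReal (by exact_mod_cast hM)
  calc ((X ⁻¹' Set.Icc c x).encard : ℝ≥0∞) / x ≤ (M + 1) / x := ENNReal.div_le_div_right hm _
    _ = M / x + (x : ℝ≥0∞)⁻¹ := by rw [ENNReal.add_div, one_div]
    _ ≤ M / ENNReal.ofReal (X M) + (x : ℝ≥0∞)⁻¹ := add_le_add_left hMx _

theorem tendsto_sum_Ncount_Icc_div (c : ℤ) {v : ℝ} (hX : Tendsto X atTop atTop)
    (hvel : Tendsto (fun n : ℕ => (X n : ℝ) / n) atTop (𝓝 v)) :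
    Tendsto (fun x : ℕ => (∑ k ∈ Finset.Icc c (x : ℤ), Ncount k X) / (x : ℝ≥0∞)) atTop
      (𝓝 (ENNReal.ofReal v)⁻¹) := by
  choose hit hit_gt hit_min using fun x : ℕ => exists_first_passage_gt hX x
  choose last last_le last_max using fun x : ℕ => exists_last_exit_le hX x
  have hd := encard_preimage_Iio_ne_top hX c
  have hratio := tendsto_div_ofReal_of_tendsto_div hvel
  have hdx : Tendsto (fun x : ℕ => ((X ⁻¹' Set.Iio c).encard : ℝ≥0∞) / x) atTop (𝓝 0) := by
    simpa [div_eq_mul_inv] using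
      ENNReal.Tendsto.const_mul ENNReal.tendsto_inv_nat_nhds_zero (Or.inr hd)
  have hlower := ENNReal.Tendsto.sub (hratio.comp (tendsto_atTop_of_natCast_lt_apply hit_gt)) hdx
    (Or.inr ENNReal.zero_ne_top)
  have hupper := (hratio.comp (tendsto_atTop_of_natCast_lt_of_lt last_max)).add
    ENNReal.tendsto_inv_nat_nhds_zero
  rw [tsub_zero] at hlower
  rw [add_zero] at hupper
  simp only [sum_Ncount_Icc_eq_encard]
  refine tendsto_of_tendsto_of_tendsto_of_le_of_le' hlower hupper ?_
    (Eventually.of_forall fun x => encard_div_le_div_ofReal_add (last_le x) (last_max x))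
  filter_upwards [eventually_ne_atTop 0] with x hx
  exact div_ofReal_sub_le_encard_div hx hd (hit_gt x) (hit_min x)

end Pathwise

namespace Env

def shift (a : ℤ) (ω : Env) : Env := fun x y => ω (x + a) (y + a)

def shiftEquiv (a : ℤ) : Env ≃ᵐ Env where
  toFun := shift a
  invFun := shift (-a)
  left_inv ω := by ext; simp [shift]
  right_inv ω := by ext; simp [shift]
  measurable_toFun := by
    change Measurable fun ω : Env => fun x y => ω (x + a) (y + a)
    fun_prop
  measurable_invFun := by
    change Measurable fun ω : Env => fun x y => ω (x + -a) (y + -a)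
    fun_prop

lemma measurable_shift (a : ℤ) : Measurable (shift a) := (shiftEquiv a).measurable

def rowsEquiv : Env ≃ᵐ (ℤ → ℤ → ℝ) where
  toFun ω x := rowOf x ω
  invFun r x y := r x (y - x)
  left_inv ω := by ext; simp [rowOf]
  right_inv r := by ext; simp [rowOf]
  measurable_toFun := by
    change Measurable fun (ω : Env) (x i : ℤ) => ω x (x + i)
    fun_prop
  measurable_invFun := by
    change Measurable fun (r : ℤ → ℤ → ℝ) (x y : ℤ) => r x (y - x)
    fun_prop

end Env

lemma IsEnv.shift {ω : Env} (h : IsEnv ω) (a : ℤ) : IsEnv (Env.shift a ω) :=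
  ⟨fun _ _ => h.1 _ _, fun x => (Equiv.addRight a).hasSum_iff.2 (h.2 (x + a))⟩

lemma measurable_rowOf (x : ℤ) : Measurable (rowOf x) := by unfold rowOf; fun_prop

theorem MeasureTheory.Measure.infinitePi_map_comp_equiv {ι β : Type*} [MeasurableSpace β]
    (ν : Measure β) [IsProbabilityMeasure ν] (σ : ι ≃ ι) :
    (Measure.infinitePi fun _ : ι => ν).map (fun r i => r (σ i)) =
      Measure.infinitePi fun _ => ν := by
  convert Measure.infinitePi_map_piCongrLeft (fun _ : ι => ν) σ.symm using 2
  ext r i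
  simp [MeasurableEquiv.piCongrLeft, Equiv.piCongrLeft]

lemma CondIID.map_shift {P : Measure Env} (h : CondIID P) (a : ℤ) : P.map (Env.shift a) = P := by
  obtain ⟨hprob, -, hind, hmarg⟩ := h
  have := Measure.isProbabilityMeasure_map (μ := P) (measurable_rowOf 0).aemeasurable
  have hrows : P.map Env.rowsEquiv = Measure.infinitePi fun _ => P.map (rowOf 0) := by
    rw [← funext hmarg]
    exact hind.map_fun_eq_infinitePi_map measurable_rowOf
  have hcomm : Env.rowsEquiv ∘ Env.shift a = (fun r x => r (x + a)) ∘ Env.rowsEquiv := by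
    ext ω x i
    simp [Env.rowsEquiv, Env.shift, rowOf, add_right_comm]
  refine Env.rowsEquiv.map_measurableEquiv_injective ?_
  rw [Measure.map_map Env.rowsEquiv.measurable (Env.measurable_shift a), hcomm,
    ← Measure.map_map (by fun_prop) Env.rowsEquiv.measurable, hrows]
  exact Measure.infinitePi_map_comp_equiv _ (Equiv.addRight a)

theorem MeasureTheory.Measure.ext_of_forall_initialSegment {α : Type*} [MeasurableSpace α]
    [Countable α] [MeasurableSingletonClass α] {μ ν : Measure (ℕ → α)} [IsFiniteMeasure ν]
    (h : ∀ (n : ℕ) (f : ℕ → α), μ {X | ∀ i ≤ n, X i = f i} = ν {X | ∀ i ≤ n, X i = f i}) :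
    μ = ν := by
  have hrange (n : ℕ) : μ.map (Finset.range (n + 1)).restrict =
      ν.map (Finset.range (n + 1)).restrict := by
    refine Measure.ext_of_singleton fun g => ?_
    have h0 : 0 ∈ Finset.range (n + 1) := by simp
    let f : ℕ → α := fun i => if hi : i ∈ Finset.range (n + 1) then g ⟨i, hi⟩ else g ⟨0, h0⟩
    have hpre : (Finset.range (n + 1)).restrict ⁻¹' ({g} : Set (Finset.range (n + 1) → α)) =
        {X | ∀ i ≤ n, X i = f i} := by
      ext X
      simp +contextual [funext_iff, f]
    rw [Measure.map_apply (Finset.measurable_restrict _) (measurableSet_singleton g),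
      Measure.map_apply (Finset.measurable_restrict _) (measurableSet_singleton g), hpre, h]
  have hproj : IsProjectiveLimit μ fun I => ν.map I.restrict := fun I => by
    have hI : I ⊆ Finset.range (I.sup id + 1) := fun i hi =>
      Finset.mem_range_succ_iff.2 (Finset.le_sup (f := id) hi)
    rw [← Finset.restrict₂_comp_restrict hI, ← Measure.map_map (Finset.measurable_restrict₂ hI)
      (Finset.measurable_restrict _), hrange, Measure.map_map (Finset.measurable_restrict₂ hI)
      (Finset.measurable_restrict _), Finset.restrict₂_comp_restrict]
  exact hproj.unique fun _ => rfl

lemma IsQuenched.unique {ω : Env} {x : ℤ} {μ ν : Measure (ℕ → ℤ)}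
    (hμ : IsQuenched ω x μ) (hν : IsQuenched ω x ν) : μ = ν :=
  have := hν.1
  Measure.ext_of_forall_initialSegment fun n f => by rw [hμ.2, hν.2]

lemma IsQuenched.map_sub {ω : Env} {x : ℤ} {μ : Measure (ℕ → ℤ)} (h : IsQuenched ω x μ)
    (a : ℤ) : IsQuenched (Env.shift a ω) (x - a) (μ.map fun X n => X n - a) := by
  have hmeas : Measurable fun (X : ℕ → ℤ) n => X n - a := by fun_prop
  have := h.1
  refine ⟨Measure.isProbabilityMeasure_map hmeas.aemeasurable, fun n f => ?_⟩
  have hpre : (fun (X : ℕ → ℤ) n => X n - a) ⁻¹' {X | ∀ i ≤ n, X i = f i} =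
      {X | ∀ i ≤ n, X i = f i + a} := by
    ext X
    simp [sub_eq_iff_eq_add]
  rw [Measure.map_apply hmeas ?_, hpre, h.2 n fun i => f i + a]
  · simp [Env.shift, eq_sub_iff_add_eq]
  · exact measurableSet_setOfPred.2 (by fun_prop)

lemma IsQuenchedFamily.map_sub {Pq : Env → ℤ → Measure (ℕ → ℤ)} (hPq : IsQuenchedFamily Pq)
    {ω : Env} (hω : IsEnv ω) (a : ℤ) :
    (Pq ω a).map (fun X n => X n - a) = Pq (Env.shift a ω) 0 := by
  have := (hPq ω hω a).map_sub a
  rw [sub_self] at this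
  exact this.unique (hPq _ (hω.shift a) 0)

lemma IsQuenchedFamily.measure_not_tendsto_occupation_le {Pq : Env → ℤ → Measure (ℕ → ℤ)}
    (hPq : IsQuenchedFamily Pq) {ω : Env} (hω : IsEnv ω) {a c : ℤ} {v : ℝ}
    (htrans : Pq (Env.shift a ω) 0 {X | Tendsto X atTop atTop} = 1) :
    Pq ω a {X | ¬ Tendsto
        (fun x : ℕ => (∑ k ∈ Finset.Icc c (x : ℤ), Ncount k X) / (x : ℝ≥0∞)) atTop
        (𝓝 (ENNReal.ofReal v)⁻¹)} ≤
      Pq (Env.shift a ω) 0 {X | ¬ Tendsto (fun n : ℕ => (X n : ℝ) / n) atTop (𝓝 v)} := by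
  set T : Set (ℕ → ℤ) := {X | Tendsto X atTop atTop}
  set V : Set (ℕ → ℤ) := {X | Tendsto (fun n : ℕ => (X n : ℝ) / n) atTop (𝓝 v)}
  have hmeas : Measurable fun (X : ℕ → ℤ) n => X n - a := by fun_prop
  have := (hPq _ (hω.shift a) 0).1
  have hsub : {X | ¬ Tendsto
      (fun x : ℕ => (∑ k ∈ Finset.Icc c (x : ℤ), Ncount k X) / (x : ℝ≥0∞)) atTop
      (𝓝 (ENNReal.ofReal v)⁻¹)} ⊆ (fun X n => X n - a) ⁻¹' (Tᶜ ∪ Vᶜ) := by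
    intro X hX
    by_contra hXY
    simp only [Set.mem_preimage, Set.mem_union, Set.mem_compl_iff, not_or, not_not] at hXY
    obtain ⟨hT, hV⟩ := hXY
    refine hX (tendsto_sum_Ncount_Icc_div c
      (by simpa using tendsto_atTop_add_const_right _ a hT) ?_)
    simpa using (hV.add (tendsto_const_div_atTop_nhds_zero_nat (a : ℝ))).congr fun n => by
      push_cast; ring
  have hT : Pq (Env.shift a ω) 0 Tᶜ = 0 :=
    (prob_compl_eq_zero_iff (measurableSet_tendsto _ fun n => measurable_pi_apply n)).2 htrans
  calc _ ≤ Pq ω a ((fun X n => X n - a) ⁻¹' (Tᶜ ∪ Vᶜ)) := measure_mono hsub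
    _ ≤ (Pq ω a).map (fun X n => X n - a) (Tᶜ ∪ Vᶜ) := Measure.le_map_apply hmeas.aemeasurable _
    _ = Pq (Env.shift a ω) 0 (Tᶜ ∪ Vᶜ) := by rw [hPq.map_sub hω a]
    _ ≤ Pq (Env.shift a ω) 0 Tᶜ + Pq (Env.shift a ω) 0 Vᶜ := measure_union_le _ _
    _ = Pq (Env.shift a ω) 0 Vᶜ := by rw [hT, zero_add]

theorem occupation_time_lln_general
    (P : Measure Env)
    (Pq : Env → ℤ → Measure (ℕ → ℤ)) (hPq : IsQuenchedFamily Pq)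
    (hC1 : CondIID P)
    (hC4 : CondTrans P Pq)
    (v : ℝ) (hv : ASLimVelocity P Pq v) (a c : ℤ) :
    ∫⁻ ω, (Pq ω a) {X | ¬ Tendsto
        (fun x : ℕ => (∑ k ∈ Finset.Icc c (x : ℤ), Ncount k X) / (x : ℝ≥0∞)) atTop
        (nhds (ENNReal.ofReal v)⁻¹)} ∂P = 0 := by
  set offSpeed : Set (ℕ → ℤ) := {X | ¬ Tendsto (fun n : ℕ => (X n : ℝ) / n) atTop (𝓝 v)}
  have hshift : MeasurePreserving (Env.shift a) P P := ⟨Env.measurable_shift a, hC1.map_shift a⟩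
  refine le_antisymm ?_ zero_le
  calc _ ≤ ∫⁻ ω, Pq (Env.shift a ω) 0 offSpeed ∂P := lintegral_mono_ae <| by
        filter_upwards [hC1.2.1, hshift.quasiMeasurePreserving.ae hC4] with ω hω htrans
        exact hPq.measure_not_tendsto_occupation_le hω htrans
    _ = ∫⁻ ω, Pq ω 0 offSpeed ∂P :=
        hshift.lintegral_comp_emb (Env.shiftEquiv a).measurableEmbedding fun ω => Pq ω 0 offSpeed
    _ = 0 := hv

/-- Under (C1)–(C4), for any integers a and c, ℙ^a-a.s.
(1/x) Σ_{k=c}^x N_k → 1/v as x → ∞ (the limit being ∞ if v = 0). -/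
theorem occupation_time_lln
    (L R : ℕ) (hL : 1 ≤ L) (hR : 1 ≤ R)
    (P : Measure Env)
    (Pq : Env → ℤ → Measure (ℕ → ℤ)) (hPq : IsQuenchedFamily Pq)
    (hC1 : CondIID P) (hC2 : CondIrred P) (hC3 : CondBdd L R P)
    (hC4 : CondTrans P Pq)
    (v : ℝ) (hv : ASLimVelocity P Pq v) (a c : ℤ) :
    ∫⁻ ω, (Pq ω a) {X | ¬ Tendsto
        (fun x : ℕ => (∑ k ∈ Finset.Icc c (x : ℤ), Ncount k X) / (x : ℝ≥0∞)) atTop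
        (nhds (ENNReal.ofReal v)⁻¹)} ∂P = 0 :=
  occupation_time_lln_general P Pq hPq hC1 hC4 v hv a c
end

section
/- The infimum defining κ₀ is attained: there exists a finite nonempty strongly connected set S ⊂ ℤ with β_S = κ₀. Moreover, letting ε := min{α_i : α_i > 0}, m₀ be an integer ≥ max(L,R) such that every interval of m₀ consecutive integers is strongly connected in 𝒢, N be an integer with N·ε ≥ d⁺ + d⁻, and M := (N−1)·m₀, the infimum is attained by a strongly connected set of diameter at most M; in particular, by translation invariance, κ₀ = min{β_S : S ⊆ [0,M], S nonempty and strongly connected}. -/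
open MeasureTheory ProbabilityTheory Filter
open scoped ENNReal NNReal Classical

/-!
A set containing `m₀` consecutive integers has, for every jump `i`, at least `|i|` exit edges
of weight `α i` (the last point of each residue class mod `i` that meets the block), so its
exit weight is at least `d⁻ + d⁺`, which bounds `β {0}`. A strongly connected set of diameter
greater than `M = (N - 1) m₀` containing no such block meets each of `N` disjoint consecutive
windows of length `m₀` (its upward jumps are at most `R ≤ m₀`), and each window, being
strongly connected, carries an exit edge of the set of weight at least `ε`; so its exit
weight is at least `N ε ≥ d⁺ + d⁻`. Every other strongly connected set is a translate of a
subset of `[0, M]`, so a minimiser of `β` among the finitely many strongly connected subsets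
of `[0, M]` is a global one.
-/

open Finset

theorem Finset.Nonempty.exists_add_notMem {T : Finset ℤ} (hT : T.Nonempty) {i : ℤ}
    (hi : i ≠ 0) : ∃ x ∈ T, x + i ∉ T := by
  rcases hi.lt_or_gt with hi | hi
  · exact ⟨T.min' hT, T.min'_mem hT, fun h => by linarith [T.min'_le _ h]⟩
  · exact ⟨T.max' hT, T.max'_mem hT, fun h => by linarith [T.le_max' _ h]⟩

theorem natAbs_le_card_filter_add_notMem {S : Finset ℤ} {i c : ℤ}
    (hc : Icc c (c + i.natAbs - 1) ⊆ S) : i.natAbs ≤ #{x ∈ S | x + i ∉ S} := by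
  rcases eq_or_ne i 0 with rfl | hi
  · simp
  rw [← card_range i.natAbs]
  refine card_le_card_of_surjOn (fun x => ((x - c) % i).toNat) fun j hj => ?_
  rw [mem_coe, mem_range] at hj
  have hcj : c + j ∈ ({x ∈ S | (x - c) % i = j} : Finset ℤ) := by
    refine mem_filter.2 ⟨hc (mem_Icc.2 ⟨by omega, by omega⟩), ?_⟩
    rw [add_sub_cancel_left, ← Int.emod_abs,
      Int.emod_eq_of_lt (by omega) (by rw [← Int.natCast_natAbs]; omega)]
  obtain ⟨x, hx, hxi⟩ := Finset.Nonempty.exists_add_notMem ⟨_, hcj⟩ hi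
  rw [mem_filter] at hx
  refine ⟨x, mem_filter.2 ⟨hx.1, fun h => hxi (mem_filter.2 ⟨h, ?_⟩)⟩, by simp [hx.2]⟩
  rw [add_sub_right_comm, Int.add_emod_right, hx.2]

theorem card_filter_add_notMem_singleton_le (x i : ℤ) :
    #{y ∈ ({x} : Finset ℤ) | y + i ∉ ({x} : Finset ℤ)} ≤ i.natAbs := by
  rcases eq_or_ne i 0 with rfl | hi
  · simp
  · exact (card_filter_le _ _).trans (Nat.one_le_iff_ne_zero.2 (Int.natAbs_ne_zero.2 hi))

theorem isSC_singleton (α : ℤ → ℝ) (x : ℤ) : IsSC α {x} := by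
  refine ⟨singleton_nonempty x, fun a ha b hb => ?_⟩
  rw [mem_singleton] at ha hb
  exact ⟨0, fun _ => a, rfl, ha.trans hb.symm, fun _ _ => ha ▸ mem_singleton_self x,
    fun i hi => absurd hi (Nat.not_lt_zero i)⟩

section

variable {L R m N : ℕ} {α : ℤ → ℝ} {ε : ℝ} {S : Finset ℤ}

theorem IsSC.image_add (hS : IsSC α S) (c : ℤ) : IsSC α (S.image (· + c)) := by
  refine ⟨hS.1.image _, ?_⟩
  simp only [mem_image]
  rintro _ ⟨x, hx, rfl⟩ _ ⟨y, hy, rfl⟩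
  obtain ⟨n, f, hf0, hfn, hfS, hstep⟩ := hS.2 x hx y hy
  exact ⟨n, (f · + c), congrArg (· + c) hf0, congrArg (· + c) hfn,
    fun i hi => ⟨f i, hfS i hi, rfl⟩, fun i hi => by simpa using hstep i hi⟩

theorem IsSC.exists_exit {B : Finset ℤ} (hB : IsSC α B) {x z : ℤ}
    (hxB : x ∈ B) (hxS : x ∈ S) (hzB : z ∈ B) (hzS : z ∉ S) :
    ∃ u ∈ B, u ∈ S ∧ ∃ i, 0 < α i ∧ u + i ∉ S := by
  obtain ⟨n, f, hf0, hfn, hfB, hstep⟩ := hB.2 x hxB z hzB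
  obtain ⟨j, hj, hj1⟩ := Nat.exists_not_and_succ_of_not_zero_of_exists
    (p := fun j => j ≤ n ∧ f j ∉ S) (by simp [hf0, hxS]) ⟨n, le_rfl, hfn ▸ hzS⟩
  have hjS : f j ∈ S := by
    by_contra h
    exact hj ⟨by omega, h⟩
  refine ⟨f j, hfB j (by omega), hjS, f (j + 1) - f j, hstep j hj1.1, ?_⟩
  rw [add_sub_cancel]
  exact hj1.2

theorem IsSC.exists_mem_Icc (hS : IsSC α S) {m : ℤ} (hm : 0 < m)
    (hup : ∀ i, 0 < α i → i ≤ m) {a b z : ℤ} (ha : a ∈ S) (hb : b ∈ S) (haz : a ≤ z)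
    (hzb : z ≤ b) : ∃ x ∈ S, x ∈ Icc z (z + m - 1) := by
  obtain ⟨n, f, hf0, hfn, hfS, hstep⟩ := hS.2 a ha b hb
  by_cases hza : z ≤ a
  · exact ⟨a, ha, mem_Icc.2 ⟨hza, by omega⟩⟩
  obtain ⟨j, hj, hj1⟩ := Nat.exists_not_and_succ_of_not_zero_of_exists
    (p := fun j => j ≤ n ∧ z ≤ f j) (by simp only [hf0]; omega) ⟨n, le_rfl, hfn ▸ hzb⟩
  have hjz : f j < z := by
    by_contra h
    exact hj ⟨by omega, by omega⟩
  have hjump := hup _ (hstep j hj1.1)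
  exact ⟨f (j + 1), hfS _ hj1.1, mem_Icc.2 ⟨hj1.2, by omega⟩⟩

variable (L R α S) in
theorem betaExit_image_add (c : ℤ) : betaExit L R α (S.image (· + c)) = betaExit L R α S := by
  unfold betaExit
  rw [sum_image fun x _ y _ h => add_right_cancel h]
  refine sum_congr rfl fun x _ => sum_congr rfl fun i _ => ?_
  simp only [mem_image, add_right_comm x c i, add_left_inj, exists_eq_right]

variable (L R α) in
theorem betaExit_eq_sum_card (S : Finset ℤ) :
    betaExit L R α S = ∑ i ∈ Icc (-(L : ℤ)) R, (#{x ∈ S | x + i ∉ S} : ℝ) * α i := by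
  unfold betaExit
  rw [sum_comm]
  refine sum_congr rfl fun i _ => ?_
  rw [← sum_filter, sum_const, nsmul_eq_mul]

variable (L R α) in
theorem sum_Icc_abs_mul_eq_dminus_add_dplus :
    ∑ i ∈ Icc (-(L : ℤ)) R, |(i : ℝ)| * α i = dminus L α + dplus R α := by
  have hsplit : Icc (-(L : ℤ)) R = Icc (-(L : ℤ)) (-1) ∪ insert 0 (Icc 1 (R : ℤ)) := by
    ext x
    simp only [mem_Icc, mem_union, mem_insert]
    omega
  rw [hsplit, sum_union (disjoint_left.2 fun x hx hx' => by simp at hx hx'; omega),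
    sum_insert (by simp)]
  simp only [Int.cast_zero, abs_zero, zero_mul, zero_add, dminus, dplus]
  refine congrArg _ (sum_congr rfl fun i hi => ?_)
  rw [abs_of_nonneg (by exact_mod_cast (mem_Icc.1 hi).1.trans' zero_le_one)]

theorem betaExit_singleton_le (hα0 : ∀ i, 0 ≤ α i) (x : ℤ) :
    betaExit L R α {x} ≤ dminus L α + dplus R α := by
  rw [betaExit_eq_sum_card, ← sum_Icc_abs_mul_eq_dminus_add_dplus]
  refine sum_le_sum fun i _ => mul_le_mul_of_nonneg_right ?_ (hα0 i)
  rw [← Int.cast_abs, ← Nat.cast_natAbs]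
  exact_mod_cast card_filter_add_notMem_singleton_le x i

theorem dminus_add_dplus_le_betaExit_of_Icc_subset (hα0 : ∀ i, 0 ≤ α i) (hm : max L R ≤ m)
    {c : ℤ} (hc : Icc c (c + m - 1) ⊆ S) : dminus L α + dplus R α ≤ betaExit L R α S := by
  rw [betaExit_eq_sum_card, ← sum_Icc_abs_mul_eq_dminus_add_dplus]
  refine sum_le_sum fun i hi => mul_le_mul_of_nonneg_right ?_ (hα0 i)
  rw [← Int.cast_abs, ← Nat.cast_natAbs, Nat.cast_le]
  refine natAbs_le_card_filter_add_notMem ((Icc_subset_Icc_right ?_).trans hc)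
  rw [mem_Icc] at hi
  omega

theorem card_mul_le_betaExit (hα0 : ∀ i, 0 ≤ α i) {U : Finset ℤ} (hUS : U ⊆ S)
    (hexit : ∀ u ∈ U, ∃ i ∈ Icc (-(L : ℤ)) R, u + i ∉ S ∧ ε ≤ α i) :
    #U * ε ≤ betaExit L R α S := by
  have hnonneg : ∀ x i, 0 ≤ if x + i ∉ S then α i else 0 := fun x i => by
    split_ifs <;> simp [hα0]
  calc (#U : ℝ) * ε = ∑ _u ∈ U, ε := by rw [sum_const, nsmul_eq_mul]
    _ ≤ ∑ u ∈ U, ∑ i ∈ Icc (-(L : ℤ)) R, if u + i ∉ S then α i else 0 := by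
        refine sum_le_sum fun u hu => ?_
        obtain ⟨i, hi, hiS, hεi⟩ := hexit u hu
        exact hεi.trans (by simpa [hiS] using single_le_sum (fun j _ => hnonneg u j) hi)
    _ ≤ betaExit L R α S :=
        sum_le_sum_of_subset_of_nonneg hUS fun x _ _ => sum_nonneg fun i _ => hnonneg x i

theorem mul_le_betaExit_of_forall_not_Icc_subset (hα0 : ∀ i, 0 ≤ α i)
    (hsupp : ∀ i : ℤ, (i < -(L : ℤ) ∨ (R : ℤ) < i) → α i = 0)
    (hε : ∀ i, 0 < α i → ε ≤ α i) (hRm : R ≤ m)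
    (hmSC : ∀ c : ℤ, IsSC α (Icc c (c + m - 1))) (hS : IsSC α S)
    (hsparse : ∀ c : ℤ, ¬ Icc c (c + m - 1) ⊆ S)
    {a b : ℤ} (ha : a ∈ S) (hb : b ∈ S) (hab : a + ((N - 1) * m : ℕ) ≤ b) :
    N * ε ≤ betaExit L R α S := by
  have hm : (0 : ℤ) < m := by
    obtain ⟨x, hx⟩ := (hmSC 0).1
    rw [mem_Icc] at hx
    omega
  have hwindow : ∀ k < N, ∃ u ∈ S, u ∈ Icc (a + k * m) (a + k * m + m - 1) ∧
      ∃ i ∈ Icc (-(L : ℤ)) R, u + i ∉ S ∧ ε ≤ α i := by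
    intro k hk
    have hkm : ((k * m : ℕ) : ℤ) ≤ ((N - 1) * m : ℕ) :=
      Nat.cast_le.2 (Nat.mul_le_mul_right _ (by omega))
    push_cast at hkm
    obtain ⟨x, hxS, hxW⟩ := hS.exists_mem_Icc hm
      (fun i hi => by by_contra h; linarith [hsupp i (by omega)]) ha hb
      (z := a + k * m) (le_add_of_nonneg_right (by positivity)) (by omega)
    obtain ⟨z, hzW, hzS⟩ := not_subset.1 (hsparse (a + k * m))
    obtain ⟨u, huW, huS, i, hi, hiS⟩ := (hmSC _).exists_exit hxW hxS hzW hzS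
    refine ⟨u, huS, huW, i, mem_Icc.2 ?_, hiS, hε i hi⟩
    by_contra h
    linarith [hsupp i (by omega)]
  choose! u huS huW hexit using hwindow
  have hinj : Set.InjOn u (range N) := by
    intro j hj k hk hjk
    have hj' := mem_Icc.1 (huW j (mem_range.1 hj))
    have hk' := mem_Icc.1 (huW k (mem_range.1 hk))
    rw [hjk] at hj'
    have h1 : (j : ℤ) < k + 1 := lt_of_mul_lt_mul_right (by linarith) hm.le
    have h2 : (k : ℤ) < j + 1 := lt_of_mul_lt_mul_right (by linarith) hm.le
    omega
  have := card_mul_le_betaExit hα0 (U := (range N).image u) (ε := ε)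
    (image_subset_iff.2 fun k hk => huS k (mem_range.1 hk))
    (forall_mem_image.2 fun k hk => hexit k (mem_range.1 hk))
  rwa [card_image_of_injOn hinj, card_range] at this

theorem dminus_add_dplus_le_betaExit (hα0 : ∀ i, 0 ≤ α i)
    (hsupp : ∀ i : ℤ, (i < -(L : ℤ) ∨ (R : ℤ) < i) → α i = 0)
    (hε : ∀ i, 0 < α i → ε ≤ α i) (hm : max L R ≤ m)
    (hmSC : ∀ c : ℤ, IsSC α (Icc c (c + m - 1))) (hN : dplus R α + dminus L α ≤ N * ε)
    (hS : IsSC α S) {a b : ℤ} (ha : a ∈ S) (hb : b ∈ S)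
    (hab : a + ((N - 1) * m : ℕ) ≤ b) :
    dminus L α + dplus R α ≤ betaExit L R α S := by
  by_cases hfull : ∃ c : ℤ, Icc c (c + m - 1) ⊆ S
  · obtain ⟨c, hc⟩ := hfull
    exact dminus_add_dplus_le_betaExit_of_Icc_subset hα0 hm hc
  · rw [not_exists] at hfull
    linarith [mul_le_betaExit_of_forall_not_Icc_subset hα0 hsupp hε (le_of_max_le_right hm)
      hmSC hS hfull ha hb hab]

theorem betaExit_le_of_forall_subset_Icc (hα0 : ∀ i, 0 ≤ α i)
    (hsupp : ∀ i : ℤ, (i < -(L : ℤ) ∨ (R : ℤ) < i) → α i = 0)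
    (hε : ∀ i, 0 < α i → ε ≤ α i) (hm : max L R ≤ m)
    (hmSC : ∀ c : ℤ, IsSC α (Icc c (c + m - 1))) (hN : dplus R α + dminus L α ≤ N * ε)
    {S₀ : Finset ℤ} (hS₀ : ∀ T ⊆ Icc 0 (((N - 1) * m : ℕ) : ℤ), IsSC α T →
      betaExit L R α S₀ ≤ betaExit L R α T)
    (hS : IsSC α S) : betaExit L R α S₀ ≤ betaExit L R α S := by
  have ha := S.min'_mem hS.1
  have hb := S.max'_mem hS.1
  by_cases hab : S.max' hS.1 - S.min' hS.1 ≤ ((N - 1) * m : ℕ)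
  · rw [← betaExit_image_add L R α S (-S.min' hS.1)]
    refine hS₀ _ (fun y hy => ?_) (hS.image_add _)
    obtain ⟨x, hx, rfl⟩ := mem_image.1 hy
    have := S.min'_le x hx
    have := S.le_max' x hx
    exact mem_Icc.2 ⟨by omega, by omega⟩
  · calc betaExit L R α S₀ ≤ betaExit L R α {0} :=
          hS₀ {0} (singleton_subset_iff.2 (mem_Icc.2 ⟨le_rfl, Nat.cast_nonneg _⟩))
            (isSC_singleton α 0)
      _ ≤ dminus L α + dplus R α := betaExit_singleton_le hα0 0
      _ ≤ betaExit L R α S :=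
          dminus_add_dplus_le_betaExit hα0 hsupp hε hm hmSC hN hS ha hb (by omega)

end

theorem kappa0_attained_general
    (L R : ℕ)
    (α : ℤ → ℝ) (hα0 : ∀ i, 0 ≤ α i)
    (hsupp : ∀ i : ℤ, (i < -(L : ℤ) ∨ (R : ℤ) < i) → α i = 0)
    (ε : ℝ) (hε : IsLeast {r : ℝ | ∃ i : ℤ, 0 < α i ∧ α i = r} ε)
    (m₀ : ℕ) (hm₀ : max L R ≤ m₀)
    (hm₀SC : ∀ a : ℤ, IsSC α (Finset.Icc a (a + (m₀ : ℤ) - 1)))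
    (N : ℕ) (hN : dplus R α + dminus L α ≤ (N : ℝ) * ε) :
    (∃ S : Finset ℤ, IsSC α S ∧ betaExit L R α S = kappa0 L R α) ∧
    (∃ S : Finset ℤ, S ⊆ Finset.Icc (0 : ℤ) (((N - 1) * m₀ : ℕ) : ℤ) ∧
      IsSC α S ∧ betaExit L R α S = kappa0 L R α) := by
  set M : ℤ := (((N - 1) * m₀ : ℕ) : ℤ)
  have hzero : {0} ⊆ Icc 0 M := singleton_subset_iff.2 (mem_Icc.2 ⟨le_rfl, Nat.cast_nonneg _⟩)
  obtain ⟨S₀, hS₀, hmin⟩ := ({T ∈ (Icc 0 M).powerset | IsSC α T}).exists_min_image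
    (betaExit L R α) ⟨{0}, mem_filter.2 ⟨mem_powerset.2 hzero, isSC_singleton α 0⟩⟩
  rw [mem_filter, mem_powerset] at hS₀
  have hleast :
      IsLeast {b | ∃ S, IsSC α S ∧ betaExit L R α S = b} (betaExit L R α S₀) := by
    refine ⟨⟨S₀, hS₀.2, rfl⟩, ?_⟩
    rintro _ ⟨S, hS, rfl⟩
    exact betaExit_le_of_forall_subset_Icc hα0 hsupp (fun i hi => hε.2 ⟨i, hi, rfl⟩) hm₀
      hm₀SC hN (fun T hT hTSC => hmin T (mem_filter.2 ⟨mem_powerset.2 hT, hTSC⟩)) hS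
  rw [kappa0, hleast.csInf_eq]
  exact ⟨⟨S₀, hS₀.2, rfl⟩, S₀, hS₀.1, hS₀.2, rfl⟩

/-- The infimum defining κ₀ is attained; moreover, with ε the least positive weight, m₀ an
integer ≥ max(L,R) such that every interval of m₀ consecutive integers is strongly connected,
and N an integer with N·ε ≥ d⁺ + d⁻, it is attained by a strongly connected subset of
[0, (N-1)·m₀]. -/
theorem kappa0_attained
    (L R : ℕ) (hL : 1 ≤ L) (hR : 1 ≤ R)
    (α : ℤ → ℝ) (hα0 : ∀ i, 0 ≤ α i)
    (hαL : 0 < α (-(L : ℤ))) (hαR : 0 < α (R : ℤ))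
    (hsupp : ∀ i : ℤ, (i < -(L : ℤ) ∨ (R : ℤ) < i) → α i = 0)
    (hgcd : ∀ d : ℕ, (∀ i : ℤ, 0 < α i → (d : ℤ) ∣ i) → d = 1)
    (ε : ℝ) (hε : IsLeast {r : ℝ | ∃ i : ℤ, 0 < α i ∧ α i = r} ε)
    (m₀ : ℕ) (hm₀ : max L R ≤ m₀)
    (hm₀SC : ∀ a : ℤ, IsSC α (Finset.Icc a (a + (m₀ : ℤ) - 1)))
    (N : ℕ) (hN : dplus R α + dminus L α ≤ (N : ℝ) * ε) :
    (∃ S : Finset ℤ, IsSC α S ∧ betaExit L R α S = kappa0 L R α) ∧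
    (∃ S : Finset ℤ, S ⊆ Finset.Icc (0 : ℤ) (((N - 1) * m₀ : ℕ) : ℤ) ∧
      IsSC α S ∧ betaExit L R α S = kappa0 L R α) :=
  kappa0_attained_general L R α hα0 hsupp ε hε m₀ hm₀ hm₀SC N hN
end
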